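/- Let C_n(z, w) be the numerator of the kernel for the sequence γ, i.e., k_n(z, w) = C_n(z, w)/(π_n(z)·conj(π_n(w))). Then for all n ≥ 0 one has C_n(z, γ_n) = p_n^*(z)·conj(p_n^*(γ_n)) for all z ∈ ℂ, and C_n(γ_n, γ_n) = |p_n^*(γ_n)|², where, when γ_n = ∞, evaluation of a polynomial of degree ≤ n at γ_n means taking its coefficient of z^n. -/

import Mathlib

/-! The polynomials `v_k = p_k ϖ_{k+1} ⋯ ϖ_n` (`k ≤ n`) are the numerators of `φ_0, …, φ_n` over
the common denominator `π_n`. Hence they are an orthonormal basis of the polynomials of degree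
`≤ n` for `⟨q, r⟩ = ∫ conj(q/π_n) (r/π_n) dμ`, and `C_n(z, w) = Σ_k v_k(z) conj(v_k(w))`.
Since `|p_n^*/π_n| = |φ_n|` on `𝕋`, `p_n^*` has norm one. If `r` vanishes at `γ_n`, then
`r = (z - γ_n) s` with `deg s < n`, and on `𝕋` we get `z^n conj(r) = ϖ_n s^*`; so
`⟨r, p_n^*⟩ = ⟨φ_n, s^*/π_{n-1}⟩ = 0`. Thus both `conj(e(p_n^*)) p_n^*` and
`Σ_k conj(e(v_k)) v_k` represent the evaluation `e` at `γ_n`, and they coincide. -/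

noncomputable section
open MeasureTheory
open scoped Classical

namespace ORF

/-- complex conjugation -/
def conj' (z : ℂ) : ℂ := (starRingEnd ℂ) z

/-- membership in the unit circle 𝕋 -/
def onT (z : ℂ) : Prop := ‖z‖ = 1

/-- `z` is a (strictly) positive real number -/
def posR (z : ℂ) : Prop := 0 < z.re ∧ z.im = 0

/-- σ_j = conj(α_j)/|α_j| (σ_j = 1 if α_j = 0, i.e. if β_j = ∞) -/
def sig (α : ℕ → ℂ) (j : ℕ) : ℂ :=
  if α j = 0 then 1 else conj' (α j) / (‖α j‖ : ℂ)

/-- ς_n = ∏_{j=1}^n σ_j -/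
def sigProd (α : ℕ → ℂ) (n : ℕ) : ℂ := ∏ j ∈ Finset.Icc 1 n, sig α j

/-- ϖ_j^α(z) = 1 − conj(α_j)·z, as a polynomial in z -/
def wA (α : ℕ → ℂ) (j : ℕ) : Polynomial ℂ :=
  1 - Polynomial.C (conj' (α j)) * Polynomial.X

/-- ϖ_j^β(z) = 1 − conj(β_j)·z = 1 − z/α_j, and −z when β_j = ∞ (α_j = 0) -/
def wB (α : ℕ → ℂ) (j : ℕ) : Polynomial ℂ :=
  if α j = 0 then -Polynomial.X else 1 - Polynomial.C (α j)⁻¹ * Polynomial.X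

/-- ϖ_j = ϖ_j^γ (γ_j = α_j when `c j`, γ_j = β_j otherwise) -/
def wG (α : ℕ → ℂ) (c : ℕ → Bool) (j : ℕ) : Polynomial ℂ :=
  if c j then wA α j else wB α j

/-- π_n^α -/
def piA (α : ℕ → ℂ) (n : ℕ) : Polynomial ℂ := ∏ j ∈ Finset.Icc 1 n, wA α j
/-- π_n^β -/
def piB (α : ℕ → ℂ) (n : ℕ) : Polynomial ℂ := ∏ j ∈ Finset.Icc 1 n, wB α j
/-- π_n = π_n^γ -/
def piG (α : ℕ → ℂ) (c : ℕ → Bool) (n : ℕ) : Polynomial ℂ := ∏ j ∈ Finset.Icc 1 n, wG α c j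

/-- 𝕒_n = {1 ≤ j ≤ n : γ_j = α_j} -/
def aSet (c : ℕ → Bool) (n : ℕ) : Finset ℕ := (Finset.Icc 1 n).filter (fun j => c j = true)
/-- 𝕓_n = {1 ≤ j ≤ n : γ_j = β_j} -/
def bSet (c : ℕ → Bool) (n : ℕ) : Finset ℕ := (Finset.Icc 1 n).filter (fun j => c j = false)

/-- Blaschke factor ζ_j^α -/
def zetaA (α : ℕ → ℂ) (j : ℕ) (z : ℂ) : ℂ :=
  if α j = 0 then z else sig α j * (z - α j) / (1 - conj' (α j) * z)

/-- Blaschke factor ζ_j^β (β_j = 1/conj(α_j); ζ_j^β(z) = 1/z when β_j = ∞) -/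
def zetaB (α : ℕ → ℂ) (j : ℕ) (z : ℂ) : ℂ :=
  if α j = 0 then z⁻¹ else sig α j * (z - (conj' (α j))⁻¹) / (1 - z / α j)

/-- ζ_j = ζ_j^γ -/
def zetaG (α : ℕ → ℂ) (c : ℕ → Bool) (j : ℕ) (z : ℂ) : ℂ :=
  if c j then zetaA α j z else zetaB α j z

/-- B_n^α -/
def BA (α : ℕ → ℂ) (n : ℕ) (z : ℂ) : ℂ := ∏ j ∈ Finset.Icc 1 n, zetaA α j z
/-- B_n^β -/
def BB (α : ℕ → ℂ) (n : ℕ) (z : ℂ) : ℂ := ∏ j ∈ Finset.Icc 1 n, zetaB α j z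
/-- B̌_n^α = ∏_{j ∈ 𝕒_n} ζ_j -/
def BcA (α : ℕ → ℂ) (c : ℕ → Bool) (n : ℕ) (z : ℂ) : ℂ := ∏ j ∈ aSet c n, zetaG α c j z
/-- B̌_n^β = ∏_{j ∈ 𝕓_n} ζ_j -/
def BcB (α : ℕ → ℂ) (c : ℕ → Bool) (n : ℕ) (z : ℂ) : ℂ := ∏ j ∈ bSet c n, zetaG α c j z

/-- ζ̌_n^α (= ζ_n if γ_n = α_n, = 1 otherwise) -/
def zcA (α : ℕ → ℂ) (c : ℕ → Bool) (n : ℕ) (z : ℂ) : ℂ :=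
  if c n then zetaG α c n z else 1
/-- ζ̌_n^β (= ζ_n if γ_n = β_n, = 1 otherwise) -/
def zcB (α : ℕ → ℂ) (c : ℕ → Bool) (n : ℕ) (z : ℂ) : ℂ :=
  if c n then 1 else zetaG α c n z

/-- The space L_n^ν = {p/π_n^ν : deg p ≤ n}; a function `f` belongs to it if it agrees
with such a rational function on the unit circle (where all these objects live). -/
def Lsp (pip : ℕ → Polynomial ℂ) (n : ℕ) : Set (ℂ → ℂ) :=
  {f | ∃ p : Polynomial ℂ, p.natDegree ≤ n ∧ ∀ z, onT z → f z = p.eval z / (pip n).eval z}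

/-- L_{n*}^ν = {f_* : f ∈ L_n^ν} (again as functions on the unit circle, where
f_*(z) = conj(f(1/conj z)) = conj(f(z))) -/
def LstarSp (pip : ℕ → Polynomial ℂ) (n : ℕ) : Set (ℂ → ℂ) :=
  {f | ∃ p : Polynomial ℂ, p.natDegree ≤ n ∧ ∀ z, onT z → f z = conj' (p.eval z / (pip n).eval z)}

/-- R_n^ν = L_n^ν · L_{n*}^ν -/
def Rset (pip : ℕ → Polynomial ℂ) (n : ℕ) : Set (ℂ → ℂ) :=
  {h | ∃ g ∈ Lsp pip n, ∃ k ∈ LstarSp pip n, ∀ z, onT z → h z = g z * k z}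

/-- the substar conjugate f_*(z) = conj(f(1/conj z)) -/
def substar (f : ℂ → ℂ) : ℂ → ℂ := fun z => conj' (f ((conj' z)⁻¹))

/-- superstar conjugate q^*(z) = z^n conj(q(1/conj z)) of a polynomial of degree ≤ n -/
def pstar (n : ℕ) (q : Polynomial ℂ) : Polynomial ℂ :=
  ∑ k ∈ Finset.range (n + 1), Polynomial.C (conj' (q.coeff k)) * Polynomial.X ^ (n - k)

/-- the inner product ⟨f,g⟩ = ∫ conj(f) g dμ -/
def inn (μ : Measure ℂ) (f g : ℂ → ℂ) : ℂ := ∫ z, conj' (f z) * g z ∂μ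

/-- the reciprocal ORF φ_n^{ν*} = B_n^ν (φ_n^ν)_* (resp. φ_n^* = B̌_n^α B̌_n^β (φ_n)_*),
written out as the rational function ς_n p_n^{ν*}/π_n^ν -/
def starF (α : ℕ → ℂ) (pip : ℕ → Polynomial ℂ) (p : ℕ → Polynomial ℂ) (n : ℕ) (z : ℂ) : ℂ :=
  sigProd α n * (pstar n (p n)).eval z / (pip n).eval z

/-- `μ` is a probability measure on the unit circle 𝕋, positive a.e. on 𝕋 -/
structure CircleMeasure (μ : Measure ℂ) : Prop where
  prob : IsProbabilityMeasure μ
  circ : μ {z | ¬ onT z} = 0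
  pos : ∀ U : Set ℂ, IsOpen U → (U ∩ {z | onT z}).Nonempty → 0 < μ U

/-- `φ` (with numerators `p`) is the sequence of orthonormal rational functions for the
nested spaces `Lsp pip`: φ_0 = 1, φ_n = p_n/π_n ∈ L_n \ L_{n-1}, φ_n ⊥ L_{n-1}, ‖φ_n‖ = 1. -/
structure IsORF (μ : Measure ℂ) (pip : ℕ → Polynomial ℂ) (φ : ℕ → ℂ → ℂ)
    (p : ℕ → Polynomial ℂ) : Prop where
  rep : ∀ n z, φ n z = (p n).eval z / (pip n).eval z
  deg : ∀ n, (p n).natDegree ≤ n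
  p0 : p 0 = 1
  notmem : ∀ n, 1 ≤ n → φ n ∉ Lsp pip (n - 1)
  orth : ∀ n, 1 ≤ n → ∀ f ∈ Lsp pip (n - 1), inn μ (φ n) f = 0
  norm : ∀ n, inn μ (φ n) (φ n) = 1

/-- normalization φ_n^{α*}(α_n) > 0 -/
def normA (α : ℕ → ℂ) (p : ℕ → Polynomial ℂ) (n : ℕ) : Prop :=
  posR (sigProd α n * (pstar n (p n)).eval (α n) / (piA α n).eval (α n))

/-- normalization φ_n^{β*}(β_n) > 0 (when β_n = ∞ the value is the limit,
i.e. the ratio of the coefficients of z^n) -/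
def normB (α : ℕ → ℂ) (p : ℕ → Polynomial ℂ) (n : ℕ) : Prop :=
  if α n = 0 then posR (sigProd α n * (pstar n (p n)).coeff n / (piB α n).coeff n)
  else posR (sigProd α n * (pstar n (p n)).eval ((conj' (α n))⁻¹) /
    (piB α n).eval ((conj' (α n))⁻¹))

/-- π̌_n^α = ∏_{j∈𝕒_n} ϖ_j -/
def pidA (α : ℕ → ℂ) (c : ℕ → Bool) (n : ℕ) : Polynomial ℂ := ∏ j ∈ aSet c n, wA α j
/-- π̌_n^β = ∏_{j∈𝕓_n} ϖ_j -/
def pidB (α : ℕ → ℂ) (c : ℕ → Bool) (n : ℕ) : Polynomial ℂ := ∏ j ∈ bSet c n, wB α j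
/-- ∏_{j∈𝕓_n}(z − β_j), a factor being −1 when β_j = ∞ -/
def dB (α : ℕ → ℂ) (c : ℕ → Bool) (n : ℕ) : Polynomial ℂ :=
  ∏ j ∈ bSet c n,
    (if α j = 0 then (-1 : Polynomial ℂ) else Polynomial.X - Polynomial.C ((conj' (α j))⁻¹))
/-- ∏_{j∈𝕒_n}(z − α_j) -/
def dA (α : ℕ → ℂ) (c : ℕ → Bool) (n : ℕ) : Polynomial ℂ :=
  ∏ j ∈ aSet c n, (Polynomial.X - Polynomial.C (α j))

/-- ς̌_n^α = ∏_{j∈𝕒_n} σ_j -/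
def sigcA (α : ℕ → ℂ) (c : ℕ → Bool) (n : ℕ) : ℂ := ∏ j ∈ aSet c n, sig α j
/-- ς̌_n^β = ∏_{j∈𝕓_n} σ_j -/
def sigcB (α : ℕ → ℂ) (c : ℕ → Bool) (n : ℕ) : ℂ := ∏ j ∈ bSet c n, sig α j

/-- normalization for the γ-sequence: (φ_n^*/B̌_n^β)(α_n) > 0 when γ_n = α_n and
(φ_n^*/B̌_n^α)(β_n) > 0 when γ_n = β_n, written via the identities
φ_n^*/B̌_n^β = ς̌_n^α p_n^*/(π̌_n^α ∏_{j∈𝕓_n}(z−β_j)) and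
φ_n^*/B̌_n^α = ς̌_n^β p_n^*/(π̌_n^β ∏_{j∈𝕒_n}(z−α_j)) (the value at β_n = ∞ being the
limit, i.e. the ratio of the coefficients of z^n). -/
def normG (α : ℕ → ℂ) (c : ℕ → Bool) (p : ℕ → Polynomial ℂ) (n : ℕ) : Prop :=
  if c n then
    posR (sigcA α c n * (pstar n (p n)).eval (α n) /
      ((pidA α c n).eval (α n) * (dB α c n).eval (α n)))
  else if α n = 0 then
    posR (sigcB α c n * (pstar n (p n)).coeff n / ((pidB α c n) * dA α c n).coeff n)
  else
    posR (sigcB α c n * (pstar n (p n)).eval ((conj' (α n))⁻¹) /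
      ((pidB α c n) * dA α c n).eval ((conj' (α n))⁻¹))

/-- the reproducing kernel k_n(z,w) = Σ_{k=0}^n φ_k(z) conj(φ_k(w)) -/
def ker (φ : ℕ → ℂ → ℂ) (n : ℕ) (z w : ℂ) : ℂ :=
  ∑ k ∈ Finset.range (n + 1), φ k z * conj' (φ k w)

/-- evaluation of a polynomial of degree ≤ m at γ_j (its coefficient of z^m when γ_j = ∞) -/
def gEval (α : ℕ → ℂ) (c : ℕ → Bool) (m j : ℕ) (q : Polynomial ℂ) : ℂ :=
  if c j then q.eval (α j)
  else if α j = 0 then q.coeff m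
  else q.eval ((conj' (α j))⁻¹)

/-- evaluation of a polynomial of degree ≤ m at β_j (its coefficient of z^m when β_j = ∞) -/
def bEval (α : ℕ → ℂ) (m j : ℕ) (q : Polynomial ℂ) : ℂ :=
  if α j = 0 then q.coeff m else q.eval ((conj' (α j))⁻¹)

/-- η_n^α (the unimodular constant in the Szegő parameter λ_n^α) -/
def etaA (α : ℕ → ℂ) (p : ℕ → Polynomial ℂ) (n : ℕ) : ℂ :=
  conj' (sigProd α (n - 2)) * conj' ((pstar (n - 1) (p (n - 1))).eval (α (n - 1))) /
    ((pstar (n - 1) (p (n - 1))).eval (α (n - 1)))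

/-- the Szegő parameter λ_n^α -/
def lamA (α : ℕ → ℂ) (p : ℕ → Polynomial ℂ) (n : ℕ) : ℂ :=
  etaA α p n * (p n).eval (α (n - 1)) / conj' ((pstar n (p n)).eval (α (n - 1)))

/-- η_n^β -/
def etaB (α : ℕ → ℂ) (p : ℕ → Polynomial ℂ) (n : ℕ) : ℂ :=
  conj' (sigProd α (n - 2)) * conj' (bEval α (n - 1) (n - 1) (pstar (n - 1) (p (n - 1)))) /
    (bEval α (n - 1) (n - 1) (pstar (n - 1) (p (n - 1))))

/-- the Szegő parameter λ_n^β -/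
def lamB (α : ℕ → ℂ) (p : ℕ → Polynomial ℂ) (n : ℕ) : ℂ :=
  etaB α p n * bEval α n (n - 1) (p n) / conj' (bEval α n (n - 1) (pstar n (p n)))

/-- η_n = η_n^γ -/
def etaG (α : ℕ → ℂ) (c : ℕ → Bool) (p : ℕ → Polynomial ℂ) (n : ℕ) : ℂ :=
  conj' (sigProd α (n - 2)) * conj' (gEval α c (n - 1) (n - 1) (pstar (n - 1) (p (n - 1)))) /
    (gEval α c (n - 1) (n - 1) (pstar (n - 1) (p (n - 1))))

/-- the Szegő parameter λ_n = λ_n^γ -/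
def lamG (α : ℕ → ℂ) (c : ℕ → Bool) (p : ℕ → Polynomial ℂ) (n : ℕ) : ℂ :=
  etaG α c p n * gEval α c n (n - 1) (p n) / conj' (gEval α c n (n - 1) (pstar n (p n)))

/-- functions of the second kind: ψ(z) = ∫ E(t,z) φ(t) − D(t,z) φ(z) dμ(t) -/
def psi (μ : Measure ℂ) (φ : ℂ → ℂ) (z : ℂ) : ℂ :=
  ∫ t, (2 * t / (t - z)) * φ t - ((t + z) / (t - z)) * φ z ∂μ

/-- ∏_{j=k+1}^n ϖ_j -/
def tailProd (α : ℕ → ℂ) (c : ℕ → Bool) (n k : ℕ) : Polynomial ℂ :=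
  ∏ j ∈ Finset.Icc (k + 1) n, wG α c j

/-- the numerator C_n(z,w) of the kernel k_n = C_n/(π_n(z) conj(π_n(w))), as a polynomial
in w after conjugation: C_n(z,w) = conj((CnPoly n z).eval w) -/
def CnPoly (α : ℕ → ℂ) (c : ℕ → Bool) (p : ℕ → Polynomial ℂ) (n : ℕ) (z : ℂ) : Polynomial ℂ :=
  ∑ k ∈ Finset.range (n + 1),
    Polynomial.C (conj' ((p k).eval z * (tailProd α c n k).eval z)) * ((p k) * tailProd α c n k)

/-- z ↦ C_n(z,∞) (the coefficient of w^n of w ↦ C_n(z,w)), as a polynomial in z -/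
def CnInf (α : ℕ → ℂ) (c : ℕ → Bool) (p : ℕ → Polynomial ℂ) (n : ℕ) : Polynomial ℂ :=
  ∑ k ∈ Finset.range (n + 1),
    ((p k) * tailProd α c n k) * Polynomial.C (conj' (((p k) * tailProd α c n k).coeff n))

/-- ϖ_n^*(z) = z − γ_n (= −1 when γ_n = ∞) -/
def wstarG (α : ℕ → ℂ) (c : ℕ → Bool) (n : ℕ) : Polynomial ℂ :=
  if c n then Polynomial.X - Polynomial.C (α n)
  else if α n = 0 then -1
  else Polynomial.X - Polynomial.C ((conj' (α n))⁻¹)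

end ORF

namespace ORF

open Polynomial Submodule Module

section Sesquilinear

variable {ι M : Type*} [Fintype ι] [AddCommGroup M] [Module ℂ M]
  {B : M →ₗ⋆[ℂ] M →ₗ[ℂ] ℂ} {v : ι → M}

theorem span_range_eq_of_isOrthoᵢ {W : Submodule ℂ M} [FiniteDimensional ℂ W]
    (hortho : B.IsOrthoᵢ v) (hnorm : ∀ i, B (v i) (v i) = 1) (hvW : ∀ i, v i ∈ W)
    (hcard : Fintype.card ι = finrank ℂ W) : span ℂ (Set.range v) = W := by
  have hli : LinearIndependent ℂ v :=
    LinearMap.linearIndependent_of_isOrthoᵢ hortho fun i => by simp [hnorm]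
  refine eq_of_le_of_finrank_eq (span_le.2 (Set.range_subset_iff.2 hvW)) ?_
  rw [finrank_span_eq_card hli, hcard]

theorem apply_sum_smul_of_isOrthoᵢ (hortho : B.IsOrthoᵢ v) (hnorm : ∀ i, B (v i) (v i) = 1)
    (a : ι → ℂ) (j : ι) : B (v j) (∑ i, a i • v i) = a j := by
  rw [map_sum, Finset.sum_eq_single j (fun i _ hij => by rw [map_smul, hortho hij.symm, smul_zero])
    (by simp), map_smul, hnorm, smul_eq_mul, mul_one]

theorem sum_conj_smul_eq_of_isOrthoᵢ (hB : B.IsSymm) (hortho : B.IsOrthoᵢ v)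
    (hnorm : ∀ i, B (v i) (v i) = 1) (e : M →ₗ[ℂ] ℂ) {P : M} (hP : P ∈ span ℂ (Set.range v))
    (hPP : B P P = 1) (heP : e P ≠ 0)
    (horth : ∀ r ∈ span ℂ (Set.range v), e r = 0 → B P r = 0) :
    ∑ i, starRingEnd ℂ (e (v i)) • v i = starRingEnd ℂ (e P) • P := by
  obtain ⟨a, rfl⟩ := (mem_span_range_iff_exists_fun ℂ).1 hP
  set P := ∑ i, a i • v i
  have hdual : ∀ j, B P (v j) = e (v j) / e P := by
    intro j
    have hr : e (v j - (e (v j) / e P) • P) = 0 := by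
      rw [map_sub, map_smul, smul_eq_mul, div_mul_cancel₀ _ heP, sub_self]
    have := horth _ (sub_mem (subset_span ⟨j, rfl⟩) (smul_mem _ _ hP)) hr
    rwa [map_sub, map_smul, hPP, smul_eq_mul, mul_one, sub_eq_zero] at this
  have hcoeff : ∀ j, starRingEnd ℂ (e (v j)) = starRingEnd ℂ (e P) * a j := by
    intro j
    rw [← apply_sum_smul_of_isOrthoᵢ hortho hnorm a j, ← hB.eq, hdual, map_div₀,
      mul_div_cancel₀ _ ((_root_.map_ne_zero _).2 heP)]
  simp only [hcoeff, mul_smul, ← Finset.smul_sum, P]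

end Sesquilinear

section CircleForm

variable {μ : Measure ℂ}

lemma onT_iff_mem_sphere {z : ℂ} : onT z ↔ z ∈ Metric.sphere (0 : ℂ) 1 := by
  rw [mem_sphere_zero_iff_norm, onT]

theorem CircleMeasure.ae_onT (hμ : CircleMeasure μ) : ∀ᵐ z ∂μ, onT z :=
  ae_iff.2 hμ.circ

theorem CircleMeasure.integrable_of_continuousOn (hμ : CircleMeasure μ) {f : ℂ → ℂ}
    (hf : ContinuousOn f (Metric.sphere 0 1)) : Integrable f μ := by
  have := hμ.prob
  have hae : ∀ᵐ z ∂μ, z ∈ Metric.sphere (0 : ℂ) 1 := by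
    filter_upwards [hμ.ae_onT] with z hz using onT_iff_mem_sphere.1 hz
  rw [← Measure.restrict_eq_self_of_ae_mem hae]
  exact hf.integrableOn_compact (isCompact_sphere 0 1)

variable {π : ℂ[X]}

lemma integrable_conj_div_mul_div (hμ : CircleMeasure μ) (hπ : ∀ z, onT z → π.eval z ≠ 0)
    (q r : ℂ[X]) :
    Integrable (fun z => conj' (q.eval z / π.eval z) * (r.eval z / π.eval z)) μ := by
  have hdiv : ∀ s : ℂ[X], ContinuousOn (fun z => s.eval z / π.eval z) (Metric.sphere 0 1) :=
    fun s => s.continuous.continuousOn.div π.continuous.continuousOn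
      fun z hz => hπ z (onT_iff_mem_sphere.2 hz)
  exact hμ.integrable_of_continuousOn
    ((Complex.continuous_conj.comp_continuousOn (hdiv q)).mul (hdiv r))

lemma conj'_inn (f g : ℂ → ℂ) : conj' (inn μ f g) = inn μ g f := by
  rw [inn, inn, conj', ← integral_conj]
  congr 1; funext z
  simp only [conj', map_mul, Complex.conj_conj, mul_comm]

def circleForm (hμ : CircleMeasure μ) (π : ℂ[X]) (hπ : ∀ z, onT z → π.eval z ≠ 0) :
    ℂ[X] →ₗ⋆[ℂ] ℂ[X] →ₗ[ℂ] ℂ :=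
  LinearMap.mk₂'ₛₗ _ _
    (fun q r => inn μ (fun z => q.eval z / π.eval z) (fun z => r.eval z / π.eval z))
    (fun q₁ q₂ r => by
      simp only [inn, eval_add, add_div, conj', map_add, add_mul]
      exact integral_add (integrable_conj_div_mul_div hμ hπ q₁ r)
        (integrable_conj_div_mul_div hμ hπ q₂ r))
    (fun a q r => by
      simp only [inn, eval_smul, smul_eq_mul, mul_div_assoc, conj', map_mul, mul_assoc,
        integral_const_mul])
    (fun q r₁ r₂ => by
      simp only [inn, eval_add, add_div, mul_add]
      exact integral_add (integrable_conj_div_mul_div hμ hπ q r₁)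
        (integrable_conj_div_mul_div hμ hπ q r₂))
    (fun a q r => by
      simp only [inn, eval_smul, smul_eq_mul, mul_div_assoc, mul_left_comm _ a,
        integral_const_mul, RingHom.id_apply])

variable {hμ : CircleMeasure μ} {hπ : ∀ z, onT z → π.eval z ≠ 0}

lemma circleForm_isSymm : (circleForm hμ π hπ).IsSymm :=
  ⟨fun _ _ => conj'_inn _ _⟩

lemma circleForm_eq_integral {q r : ℂ[X]} {F : ℂ → ℂ}
    (h : ∀ z, onT z → conj' (q.eval z / π.eval z) * (r.eval z / π.eval z) = F z) :
    circleForm hμ π hπ q r = ∫ z, F z ∂μ :=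
  integral_congr_ae (by filter_upwards [hμ.ae_onT] with z hz using h z hz)

end CircleForm

section Numerators

variable {α : ℕ → ℂ} {c : ℕ → Bool}

lemma mul_conj'_of_onT {z : ℂ} (hz : onT z) : z * conj' z = 1 := by
  rw [conj', Complex.mul_conj', hz]; simp

lemma eval_wG_eq_mul_conj'_eval_wstarG {n : ℕ} {z : ℂ} (hz : onT z) :
    (wG α c n).eval z = z * conj' ((wstarG α c n).eval z) := by
  have hzz := mul_conj'_of_onT hz
  unfold wG wA wB wstarG conj' at *
  split_ifs <;> simp only [eval_sub, eval_one, eval_mul, eval_C, eval_X, eval_neg, map_sub,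
    map_neg, map_one, map_inv₀, Complex.conj_conj]
  · linear_combination -hzz
  · ring
  · linear_combination -hzz

lemma eval_wstarG_ne_zero {n : ℕ} (hαn : ‖α n‖ < 1) {z : ℂ} (hz : onT z) :
    (wstarG α c n).eval z ≠ 0 := by
  unfold wstarG
  split_ifs with hc hα0
  · simp only [eval_sub, eval_X, eval_C, sub_ne_zero]
    rintro rfl
    exact hαn.ne hz
  · simp
  · simp only [eval_sub, eval_X, eval_C, sub_ne_zero]
    rintro rfl
    rw [onT, norm_inv, conj', Complex.norm_conj, inv_eq_one] at hz
    exact hαn.ne hz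

lemma eval_wG_ne_zero {n : ℕ} (hαn : ‖α n‖ < 1) {z : ℂ} (hz : onT z) :
    (wG α c n).eval z ≠ 0 := by
  rw [eval_wG_eq_mul_conj'_eval_wstarG hz, conj']
  refine mul_ne_zero (fun h => ?_) ((_root_.map_ne_zero _).2 (eval_wstarG_ne_zero hαn hz))
  simp [onT, h] at hz

lemma eval_prod_wG_ne_zero (hα : ∀ j, ‖α j‖ < 1) (s : Finset ℕ) {z : ℂ} (hz : onT z) :
    (∏ j ∈ s, wG α c j).eval z ≠ 0 := by
  rw [eval_prod]
  exact Finset.prod_ne_zero_iff.2 fun j _ => eval_wG_ne_zero (hα j) hz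

lemma eval_piG_ne_zero (hα : ∀ j, ‖α j‖ < 1) (n : ℕ) (z : ℂ) (hz : onT z) :
    (piG α c n).eval z ≠ 0 :=
  eval_prod_wG_ne_zero hα _ hz

lemma eval_tailProd_ne_zero (hα : ∀ j, ‖α j‖ < 1) (n k : ℕ) {z : ℂ} (hz : onT z) :
    (tailProd α c n k).eval z ≠ 0 :=
  eval_prod_wG_ne_zero hα _ hz

lemma piG_eq_mul_tailProd {n k : ℕ} (hk : k ≤ n) :
    piG α c n = piG α c k * tailProd α c n k := by
  have hIcc : ∀ m, Finset.Icc 1 m = Finset.Ioc 0 m := Finset.Icc_add_one_left_eq_Ioc 0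
  simp only [piG, tailProd, hIcc, Finset.Icc_add_one_left_eq_Ioc]
  exact (Finset.prod_Ioc_consecutive _ (Nat.zero_le k) hk).symm

lemma piG_succ (m : ℕ) : piG α c (m + 1) = piG α c m * wG α c (m + 1) :=
  Finset.prod_Icc_succ_top (by omega) _

lemma natDegree_wG_le (j : ℕ) : (wG α c j).natDegree ≤ 1 := by
  unfold wG wA wB
  split_ifs <;> compute_degree

lemma natDegree_tailProd_le (n k : ℕ) : (tailProd α c n k).natDegree ≤ n - k := by
  refine (natDegree_prod_le _ _).trans ?_
  refine (Finset.sum_le_card_nsmul _ _ 1 fun j _ => natDegree_wG_le j).trans ?_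
  simp

lemma natDegree_pstar_le (m : ℕ) (q : ℂ[X]) : (pstar m q).natDegree ≤ m :=
  natDegree_sum_le_of_forall_le _ _ fun _ _ => (natDegree_C_mul_le _ _).trans (by simp)

lemma eval_pstar_of_onT {m : ℕ} {q : ℂ[X]} (hq : q.natDegree ≤ m) {z : ℂ} (hz : onT z) :
    (pstar m q).eval z = z ^ m * conj' (q.eval z) := by
  have hzz := mul_conj'_of_onT hz
  rw [eval_eq_sum_range' (Nat.lt_succ_of_le hq), pstar, eval_finsetSum, conj', map_sum,
    Finset.mul_sum]
  refine Finset.sum_congr rfl fun k hk => ?_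
  have hkm : k ≤ m := Nat.lt_succ_iff.1 (Finset.mem_range.1 hk)
  have hpow : z ^ m * conj' z ^ k = z ^ (m - k) := by
    rw [← Nat.sub_add_cancel hkm, pow_add, mul_assoc, ← mul_pow, hzz, one_pow, mul_one,
      Nat.add_sub_cancel]
  simp only [eval_mul, eval_C, eval_pow, eval_X, map_mul, map_pow, ← hpow, conj']
  ring

def numerOver (α : ℕ → ℂ) (c : ℕ → Bool) (p : ℕ → ℂ[X]) (n k : ℕ) : ℂ[X] :=
  p k * tailProd α c n k

variable {μ : Measure ℂ} {φ : ℕ → ℂ → ℂ} {p : ℕ → ℂ[X]}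

lemma natDegree_numerOver_le (hφ : IsORF μ (piG α c) φ p) {n k : ℕ} (hk : k ≤ n) :
    (numerOver α c p n k).natDegree ≤ n := by
  have := hφ.deg k
  have := natDegree_tailProd_le (α := α) (c := c) n k
  exact natDegree_mul_le.trans (by omega)

lemma eval_numerOver_div_eval_piG (hα : ∀ j, ‖α j‖ < 1) (hφ : IsORF μ (piG α c) φ p)
    {n k : ℕ} (hk : k ≤ n) {z : ℂ} (hz : onT z) :
    (numerOver α c p n k).eval z / (piG α c n).eval z = φ k z := by
  rw [hφ.rep, numerOver, piG_eq_mul_tailProd hk, eval_mul, eval_mul,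
    mul_div_mul_right _ _ (eval_tailProd_ne_zero hα n k hz)]

lemma IsORF.mem_Lsp (hα : ∀ j, ‖α j‖ < 1) (hφ : IsORF μ (piG α c) φ p) {k n : ℕ}
    (hk : k ≤ n) : φ k ∈ Lsp (piG α c) n :=
  ⟨numerOver α c p n k, natDegree_numerOver_le hφ hk,
    fun _ hz => (eval_numerOver_div_eval_piG hα hφ hk hz).symm⟩

lemma IsORF.inn_eq_zero_of_lt (hα : ∀ j, ‖α j‖ < 1) (hφ : IsORF μ (piG α c) φ p) {k l : ℕ}
    (hkl : k < l) : inn μ (φ l) (φ k) = 0 :=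
  hφ.orth l (by omega) _ (hφ.mem_Lsp hα (by omega))

lemma circleForm_numerOver (hμ : CircleMeasure μ) (hα : ∀ j, ‖α j‖ < 1)
    (hφ : IsORF μ (piG α c) φ p) {n k l : ℕ} (hk : k ≤ n) (hl : l ≤ n) :
    circleForm hμ (piG α c n) (eval_piG_ne_zero hα n) (numerOver α c p n k)
      (numerOver α c p n l) = inn μ (φ k) (φ l) :=
  circleForm_eq_integral fun _ hz => by
    rw [eval_numerOver_div_eval_piG hα hφ hk hz, eval_numerOver_div_eval_piG hα hφ hl hz]

lemma circleForm_pstar_self (hμ : CircleMeasure μ) (hα : ∀ j, ‖α j‖ < 1)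
    (hφ : IsORF μ (piG α c) φ p) (n : ℕ) :
    circleForm hμ (piG α c n) (eval_piG_ne_zero hα n) (pstar n (p n)) (pstar n (p n)) = 1 := by
  rw [← hφ.norm n]
  refine circleForm_eq_integral fun z hz => ?_
  have hzn : conj' z ^ n * z ^ n = 1 := by
    rw [← mul_pow, mul_comm, mul_conj'_of_onT hz, one_pow]
  rw [eval_pstar_of_onT (hφ.deg n) hz, hφ.rep]
  simp only [conj', map_div₀, map_mul, map_pow, Complex.conj_conj] at hzn ⊢
  rw [div_mul_div_comm, div_mul_div_comm]
  congr 1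
  linear_combination (p n).eval z * (starRingEnd ℂ) ((p n).eval z) * hzn

lemma circleForm_pstar_wstarG_mul (hμ : CircleMeasure μ) (hα : ∀ j, ‖α j‖ < 1)
    (hφ : IsORF μ (piG α c) φ p) {n : ℕ} {s : ℂ[X]} (hs : s.natDegree < n) :
    circleForm hμ (piG α c n) (eval_piG_ne_zero hα n) (pstar n (p n)) (wstarG α c n * s) =
      0 := by
  obtain ⟨m, rfl⟩ : ∃ m, n = m + 1 := ⟨n - 1, by omega⟩
  have horth : inn μ (φ (m + 1)) (fun z => (pstar m s).eval z / (piG α c m).eval z) = 0 :=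
    hφ.orth (m + 1) (by omega) _ ⟨pstar m s, natDegree_pstar_le m s, fun _ _ => rfl⟩
  rw [← circleForm_isSymm.eq, ← map_zero (starRingEnd ℂ), ← horth]
  congr 1
  refine circleForm_eq_integral fun z hz => ?_
  have hz0 : z ≠ 0 := fun h => by simp [onT, h] at hz
  have hπ := eval_piG_ne_zero (c := c) hα m z hz
  have hw := eval_wstarG_ne_zero (c := c) (hα (m + 1)) hz
  have := (_root_.map_ne_zero (starRingEnd ℂ)).2 hz0
  have := (_root_.map_ne_zero (starRingEnd ℂ)).2 hπ
  have := (_root_.map_ne_zero (starRingEnd ℂ)).2 hw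
  dsimp only
  rw [eval_pstar_of_onT (hφ.deg _) hz, eval_pstar_of_onT (by omega) hz, hφ.rep, piG_succ,
    eval_mul, eval_mul, eval_wG_eq_mul_conj'_eval_wstarG hz]
  simp only [conj', map_div₀, map_mul, Complex.conj_conj]
  field_simp
  ring

/-- Evaluation at `γ_n`; at `γ_n = ∞` (`c n = false`, `α n = 0`) it takes the coefficient of
`z ^ n`. -/
def gammaEval (α : ℕ → ℂ) (c : ℕ → Bool) (n : ℕ) : ℂ[X] →ₗ[ℂ] ℂ :=
  if c n then leval (α n) else if α n = 0 then lcoeff ℂ n else leval (conj' (α n))⁻¹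

lemma exists_eq_X_sub_C_mul {n : ℕ} {r : ℂ[X]} (hr : r ≠ 0) (hdeg : r.natDegree ≤ n) {a : ℂ}
    (ha : r.eval a = 0) : ∃ s : ℂ[X], s.natDegree < n ∧ r = (X - C a) * s := by
  refine ⟨r /ₘ (X - C a), ?_, (mul_divByMonic_eq_iff_isRoot.2 ha).symm⟩
  have hs : r /ₘ (X - C a) ≠ 0 := by
    rintro h
    rw [← mul_divByMonic_eq_iff_isRoot.2 ha, h, mul_zero] at hr
    exact hr rfl
  have := natDegree_mul (X_sub_C_ne_zero a) hs
  rw [natDegree_X_sub_C, mul_divByMonic_eq_iff_isRoot.2 ha] at this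
  omega

lemma exists_eq_wstarG_mul_of_gammaEval_eq_zero {n : ℕ} {r : ℂ[X]} (hr : r ≠ 0)
    (hdeg : r.natDegree ≤ n) (he : gammaEval α c n r = 0) :
    ∃ s : ℂ[X], s.natDegree < n ∧ r = wstarG α c n * s := by
  unfold gammaEval at he
  unfold wstarG
  split_ifs at he ⊢
  · exact exists_eq_X_sub_C_mul hr hdeg he
  · refine ⟨-r, ?_, by ring⟩
    rw [natDegree_neg]
    refine hdeg.lt_of_ne fun h => hr (leadingCoeff_eq_zero.1 ?_)
    rwa [leadingCoeff, h]
  · exact exists_eq_X_sub_C_mul hr hdeg he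

lemma gammaEval_pstar_ne_zero {p : ℕ → ℂ[X]} {n : ℕ} (hnφ : normG α c p n) :
    gammaEval α c n (pstar n (p n)) ≠ 0 := by
  unfold normG at hnφ
  unfold gammaEval
  split_ifs at hnφ ⊢ <;> intro h <;> simp_all [posR]

lemma mem_degreeLT_succ_iff {n : ℕ} {r : ℂ[X]} : r ∈ degreeLT ℂ (n + 1) ↔ r.natDegree ≤ n := by
  rw [degreeLT_succ_eq_degreeLE, mem_degreeLE, natDegree_le_iff_degree_le]

theorem sum_conj'_gammaEval_smul_numerOver (hμ : CircleMeasure μ) (hα : ∀ j, ‖α j‖ < 1)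
    (hφ : IsORF μ (piG α c) φ p) {n : ℕ} (hnφ : normG α c p n) :
    ∑ k ∈ Finset.range (n + 1),
        conj' (gammaEval α c n (numerOver α c p n k)) • numerOver α c p n k =
      conj' (gammaEval α c n (pstar n (p n))) • pstar n (p n) := by
  set B := circleForm hμ (piG α c n) (eval_piG_ne_zero hα n)
  set v : Fin (n + 1) → ℂ[X] := fun k => numerOver α c p n k
  have hortho : B.IsOrthoᵢ v := fun k l hkl => by
    rw [Function.onFun, circleForm_numerOver hμ hα hφ (by omega) (by omega)]
    rcases lt_or_gt_of_ne (Fin.val_ne_of_ne hkl) with h | h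
    · rw [← conj'_inn, hφ.inn_eq_zero_of_lt hα h, conj', map_zero]
    · exact hφ.inn_eq_zero_of_lt hα h
  have hnorm : ∀ k, B (v k) (v k) = 1 := fun k => by
    rw [circleForm_numerOver hμ hα hφ (by omega) (by omega), hφ.norm]
  have : FiniteDimensional ℂ (degreeLT ℂ (n + 1)) :=
    LinearEquiv.finiteDimensional (degreeLTEquiv ℂ (n + 1)).symm
  have hspan : span ℂ (Set.range v) = degreeLT ℂ (n + 1) :=
    span_range_eq_of_isOrthoᵢ hortho hnorm
      (fun k => mem_degreeLT_succ_iff.2 (natDegree_numerOver_le hφ (by omega)))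
      (by rw [(degreeLTEquiv ℂ (n + 1)).finrank_eq, finrank_fin_fun, Fintype.card_fin])
  rw [← Fin.sum_univ_eq_sum_range (fun k => conj' (gammaEval α c n (numerOver α c p n k)) •
    numerOver α c p n k)]
  refine sum_conj_smul_eq_of_isOrthoᵢ circleForm_isSymm hortho hnorm _
    (hspan ▸ mem_degreeLT_succ_iff.2 (natDegree_pstar_le n (p n)))
    (circleForm_pstar_self hμ hα hφ n) (gammaEval_pstar_ne_zero hnφ) ?_
  rw [hspan]
  intro r hr he
  rcases eq_or_ne r 0 with rfl | hr0
  · exact map_zero _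
  obtain ⟨s, hs, rfl⟩ :=
    exists_eq_wstarG_mul_of_gammaEval_eq_zero hr0 (mem_degreeLT_succ_iff.1 hr) he
  exact circleForm_pstar_wstarG_mul hμ hα hφ hs

lemma conj'_eval_CnPoly (n : ℕ) (a z : ℂ) :
    conj' ((CnPoly α c p n z).eval a) =
      (∑ k ∈ Finset.range (n + 1),
        conj' ((numerOver α c p n k).eval a) • numerOver α c p n k).eval z := by
  simp only [CnPoly, numerOver, eval_finsetSum, eval_mul, eval_C, eval_smul, smul_eq_mul,
    conj', map_sum, map_mul, Complex.conj_conj]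
  exact Finset.sum_congr rfl fun _ _ => by ring

lemma CnInf_eq_sum_smul (n : ℕ) :
    CnInf α c p n = ∑ k ∈ Finset.range (n + 1),
      conj' ((numerOver α c p n k).coeff n) • numerOver α c p n k := by
  simp only [CnInf, numerOver, smul_eq_C_mul, mul_comm]

end Numerators

end ORF

open ORF MeasureTheory

theorem stmt9_general (α : ℕ → ℂ) (hα : ∀ j, ‖α j‖ < 1)
    (c : ℕ → Bool) (μ : Measure ℂ) (hμ : CircleMeasure μ)
    (φ : ℕ → ℂ → ℂ) (p : ℕ → Polynomial ℂ)
    (hφ : IsORF μ (piG α c) φ p) (hnφ : ∀ n, normG α c p n)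
    (n : ℕ) :
    (c n = true →
      (∀ z, conj' ((CnPoly α c p n z).eval (α n)) =
          (pstar n (p n)).eval z * conj' ((pstar n (p n)).eval (α n))) ∧
      conj' ((CnPoly α c p n (α n)).eval (α n)) =
        (‖(pstar n (p n)).eval (α n)‖ : ℂ) ^ 2) ∧
    (c n = false → α n ≠ 0 →
      (∀ z, conj' ((CnPoly α c p n z).eval ((conj' (α n))⁻¹)) =
          (pstar n (p n)).eval z * conj' ((pstar n (p n)).eval ((conj' (α n))⁻¹))) ∧
      conj' ((CnPoly α c p n ((conj' (α n))⁻¹)).eval ((conj' (α n))⁻¹)) =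
        (‖(pstar n (p n)).eval ((conj' (α n))⁻¹)‖ : ℂ) ^ 2) ∧
    (c n = false → α n = 0 →
      (∀ z, (CnInf α c p n).eval z =
          (pstar n (p n)).eval z * conj' ((pstar n (p n)).coeff n)) ∧
      (CnInf α c p n).coeff n = (‖(pstar n (p n)).coeff n‖ : ℂ) ^ 2) := by
  have key := sum_conj'_gammaEval_smul_numerOver hμ hα hφ (hnφ n)
  have hsq : ∀ x : ℂ, x * conj' x = (‖x‖ : ℂ) ^ 2 := Complex.mul_conj'
  have hCn : ∀ a, gammaEval α c n = Polynomial.leval a → ∀ z,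
      conj' ((CnPoly α c p n z).eval a) =
        (pstar n (p n)).eval z * conj' ((pstar n (p n)).eval a) := by
    intro a ha z
    rw [ha] at key
    simp only [Polynomial.leval_apply] at key
    rw [conj'_eval_CnPoly, key, Polynomial.eval_smul, smul_eq_mul, mul_comm]
  refine ⟨fun hc => ?_, fun hc hαn => ?_, fun hc hαn => ?_⟩
  · have h := hCn (α n) (by simp [gammaEval, hc])
    exact ⟨h, (h _).trans (hsq _)⟩
  · have h := hCn (conj' (α n))⁻¹ (by simp [gammaEval, hc, hαn])
    exact ⟨h, (h _).trans (hsq _)⟩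
  · simp only [gammaEval, hc, hαn, Bool.false_eq_true, if_false, if_true,
      Polynomial.lcoeff_apply, ← CnInf_eq_sum_smul] at key
    rw [key]
    exact ⟨fun z => by rw [Polynomial.eval_smul, smul_eq_mul, mul_comm],
      by rw [Polynomial.coeff_smul, smul_eq_mul, mul_comm, hsq]⟩

/-- Corollary `rorCCD2`: if C_n(z,w) is the numerator of the kernel for
the sequence γ, i.e. k_n(z,w) = C_n(z,w)/(π_n(z)·conj(π_n(w))), then for all n ≥ 0,
C_n(z,γ_n) = p_n^*(z)·conj(p_n^*(γ_n)) for all z, and C_n(γ_n,γ_n) = |p_n^*(γ_n)|²,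
evaluation at γ_n = ∞ meaning the coefficient of z^n.  Here
C_n(z,w) = conj((CnPoly n z).eval w), C_n(z,∞) = (CnInf n).eval z and
C_n(∞,∞) = (CnInf n).coeff n. -/
theorem stmt9 (α : ℕ → ℂ) (hα0 : α 0 = 0) (hα : ∀ j, ‖α j‖ < 1)
    (c : ℕ → Bool) (μ : Measure ℂ) (hμ : CircleMeasure μ)
    (φ : ℕ → ℂ → ℂ) (p : ℕ → Polynomial ℂ)
    (hφ : IsORF μ (piG α c) φ p) (hnφ : ∀ n, normG α c p n)
    (n : ℕ) :
    (c n = true →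
      (∀ z, conj' ((CnPoly α c p n z).eval (α n)) =
          (pstar n (p n)).eval z * conj' ((pstar n (p n)).eval (α n))) ∧
      conj' ((CnPoly α c p n (α n)).eval (α n)) =
        (‖(pstar n (p n)).eval (α n)‖ : ℂ) ^ 2) ∧
    (c n = false → α n ≠ 0 →
      (∀ z, conj' ((CnPoly α c p n z).eval ((conj' (α n))⁻¹)) =
          (pstar n (p n)).eval z * conj' ((pstar n (p n)).eval ((conj' (α n))⁻¹))) ∧
      conj' ((CnPoly α c p n ((conj' (α n))⁻¹)).eval ((conj' (α n))⁻¹)) =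
        (‖(pstar n (p n)).eval ((conj' (α n))⁻¹)‖ : ℂ) ^ 2) ∧
    (c n = false → α n = 0 →
      (∀ z, (CnInf α c p n).eval z =
          (pstar n (p n)).eval z * conj' ((pstar n (p n)).coeff n)) ∧
      (CnInf α c p n).coeff n = (‖(pstar n (p n)).coeff n‖ : ℂ) ^ 2) :=
  stmt9_general α hα c μ hμ φ p hφ hnφ n
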